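/- arXiv:2312.07727 — 2 statements merged into one kernel-verified Lean document; each statement's English description precedes it below -/
import Mathlib

section
/- Every minimizer f̂ ∈ ℋ of ℓ admits a finite-dimensional representation f̂ = Σ_{k=1}^m d_k φ_k + Σ_{j=1}^M c_j R(t_j, ·) for some real coefficients d_1, …, d_m and c_1, …, c_M. -/
/-!
Let `V = ℋ₀ + span {R(t_j, ·)}`; it contains every `K_{t_j}`, since `K_{t_j} - R(t_j, ·) ∈ ℋ₀`.
Projecting a function `f` orthogonally onto `V` therefore leaves the data `f(t_j)` unchanged, and
the removed component `w ⊥ V` lies in `ℋ₁` and is orthogonal to `P₁` of the projection, so it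
adds exactly `‖w‖²` to `J`. Hence `ℓ(f) = ℓ(P_V f) + (λ/2) ‖w‖²`, and a minimizer has `w = 0`.
-/

open scoped RealInnerProductSpace

section

variable {𝕜 E : Type*} [RCLike 𝕜] [NormedAddCommGroup E] [InnerProductSpace 𝕜 E]

theorem Submodule.mem_of_forall_le_of_eq_add_norm_sq {V : Submodule 𝕜 E}
    [V.HasOrthogonalProjection] {ℓ : E → ℝ} {c : ℝ} (hc : 0 < c) {f : E}
    (hsplit : ℓ f = ℓ (V.starProjection f) + c * ‖f - V.starProjection f‖ ^ 2)
    (hmin : ∀ g, ℓ f ≤ ℓ g) : f ∈ V := by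
  have hsq : ‖f - V.starProjection f‖ ^ 2 ≤ 0 := by
    nlinarith [hmin (V.starProjection f)]
  have hf : f - V.starProjection f = 0 := by
    simpa using le_antisymm hsq (sq_nonneg _)
  rw [sub_eq_zero] at hf
  exact hf ▸ V.starProjection_apply_mem f

theorem Submodule.norm_starProjection_orthogonal_add_sq {U V : Submodule 𝕜 E}
    [U.HasOrthogonalProjection] (hUV : U ≤ V) {v w : E} (hv : v ∈ V) (hw : w ∈ Vᗮ) :
    ‖Uᗮ.starProjection (v + w)‖ ^ 2 = ‖Uᗮ.starProjection v‖ ^ 2 + ‖w‖ ^ 2 := by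
  have hwU : Uᗮ.starProjection w = w :=
    starProjection_eq_self_iff.mpr (orthogonal_le hUV hw)
  have hvV : Uᗮ.starProjection v ∈ V := by
    rw [starProjection_orthogonal_val]
    exact V.sub_mem hv (hUV (U.starProjection_apply_mem v))
  rw [map_add, hwU]
  simpa only [sq] using norm_add_sq_eq_norm_sq_add_norm_sq_of_inner_eq_zero _ _ (hw _ hvV)

theorem Submodule.mem_sup_of_starProjection_orthogonal_mem {U W : Submodule 𝕜 E}
    [U.HasOrthogonalProjection] {x : E} (hx : Uᗮ.starProjection x ∈ W) : x ∈ U ⊔ W := by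
  rw [starProjection_orthogonal_val] at hx
  exact mem_sup.2 ⟨_, U.starProjection_apply_mem x, _, hx, add_sub_cancel _ _⟩

end

theorem Submodule.exists_eq_sum_add_sum_of_mem_sup_span {R M ι κ : Type*} [Semiring R]
    [AddCommMonoid M] [Module R M] [Fintype ι] [Fintype κ] {φ : ι → M} {ψ : κ → M} {x : M}
    (hx : x ∈ span R (Set.range φ) ⊔ span R (Set.range ψ)) :
    ∃ (d : ι → R) (c : κ → R), x = ∑ i, d i • φ i + ∑ k, c k • ψ k := by
  obtain ⟨a, ha, b, hb, rfl⟩ := mem_sup.1 hx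
  obtain ⟨d, rfl⟩ := (mem_span_range_iff_exists_fun R).1 ha
  obtain ⟨c, rfl⟩ := (mem_span_range_iff_exists_fun R).1 hb
  exact ⟨d, c, rfl⟩

theorem representer_theorem_general
    {H : Type*} [NormedAddCommGroup H] [InnerProductSpace ℝ H]
    {T : Type*} (ev : H → T → ℝ) (K : T → H)
    (hK : ∀ (t : T) (f : H), ⟪K t, f⟫ = ev f t)
    (H₀ : Submodule ℝ H) [FiniteDimensional ℝ H₀]
    (mdim : ℕ) (φ : Fin mdim → H)
    (hφspan : Submodule.span ℝ (Set.range φ) = H₀)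
    (lam : ℝ) (hlam : 0 < lam)
    (M : ℕ) (t : Fin M → T) (y : Fin M → ℝ)
    (ℓ : H → ℝ)
    (hℓ : ∀ f : H, ℓ f = (1 / (2 * (M : ℝ))) * ∑ j, (y j - ev f (t j))^2
        + (lam / 2) * ‖((Submodule.orthogonalProjectionOnto H₀ᗮ f : H₀ᗮ) : H)‖^2)
    (fhat : H) (hmin : ∀ g : H, ℓ fhat ≤ ℓ g) :
    ∃ (d : Fin mdim → ℝ) (c : Fin M → ℝ),
      fhat = (∑ k, d k • φ k)
        + ∑ j, c j • ((Submodule.orthogonalProjectionOnto H₀ᗮ (K (t j)) : H₀ᗮ) : H) := by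
  simp_rw [← Submodule.starProjection_apply] at hℓ ⊢
  set V := H₀ ⊔ Submodule.span ℝ (Set.range fun j ↦ H₀ᗮ.starProjection (K (t j)))
  have := FiniteDimensional.span_of_finite ℝ
    (Set.finite_range fun j ↦ H₀ᗮ.starProjection (K (t j)))
  have hKV (j : Fin M) : K (t j) ∈ V :=
    Submodule.mem_sup_of_starProjection_orthogonal_mem (Submodule.subset_span ⟨j, rfl⟩)
  have hev (j : Fin M) : ev (V.starProjection fhat) (t j) = ev fhat (t j) := by
    rw [← hK, ← hK, ← Submodule.inner_starProjection_left_eq_right,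
      Submodule.starProjection_eq_self_iff.mpr (hKV j)]
  have hJ := Submodule.norm_starProjection_orthogonal_add_sq le_sup_left
    (V.starProjection_apply_mem fhat) (V.sub_starProjection_mem_orthogonal fhat)
  rw [add_sub_cancel] at hJ
  have hfV : fhat ∈ V := by
    refine Submodule.mem_of_forall_le_of_eq_add_norm_sq (half_pos hlam) ?_ hmin
    simp only [hℓ, hev, hJ]
    ring
  subst hφspan
  exact Submodule.exists_eq_sum_add_sum_of_mem_sup_span hfV

/-- **representer theorem.** In a real RKHS `ℋ` of functions on a set `𝒯`
with reproducing kernel `K`, let `ℋ₀` be a finite-dimensional subspace with basis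
`φ_1, …, φ_m`, let `P₁` be the orthogonal projection onto `ℋ₁ = ℋ₀^⊥`, set
`J(f,f) = ‖P₁ f‖²` and `R(s, ·) = P₁ K_s`. Then every minimizer `f̂` of
`ℓ(f) = (1/(2M)) Σ_j (y_j − f(t_j))² + (λ/2) J(f,f)` has the form
`f̂ = Σ_{k=1}^m d_k φ_k + Σ_{j=1}^M c_j R(t_j, ·)`. -/
theorem representer_theorem
    {H : Type*} [NormedAddCommGroup H] [InnerProductSpace ℝ H] [CompleteSpace H]
    {T : Type*} (ev : H → T → ℝ) (K : T → H)
    (hK : ∀ (t : T) (f : H), ⟪K t, f⟫ = ev f t)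
    (H₀ : Submodule ℝ H) [FiniteDimensional ℝ H₀]
    (mdim : ℕ) (φ : Fin mdim → H)
    (hφmem : ∀ k, φ k ∈ H₀) (hφindep : LinearIndependent ℝ φ)
    (hφspan : Submodule.span ℝ (Set.range φ) = H₀)
    (lam : ℝ) (hlam : 0 < lam)
    (M : ℕ) (t : Fin M → T) (y : Fin M → ℝ)
    (ℓ : H → ℝ)
    (hℓ : ∀ f : H, ℓ f = (1 / (2 * (M : ℝ))) * ∑ j, (y j - ev f (t j))^2
        + (lam / 2) * ‖((Submodule.orthogonalProjectionOnto H₀ᗮ f : H₀ᗮ) : H)‖^2)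
    (fhat : H) (hmin : ∀ g : H, ℓ fhat ≤ ℓ g) :
    ∃ (d : Fin mdim → ℝ) (c : Fin M → ℝ),
      fhat = (∑ k, d k • φ k)
        + ∑ j, c j • ((Submodule.orthogonalProjectionOnto H₀ᗮ (K (t j)) : H₀ᗮ) : H) :=
  representer_theorem_general ev K hK H₀ mdim φ hφspan lam hlam M t y ℓ hℓ fhat hmin
end

section
/- There exists a constant C_K > 0, depending only on m, c₀ and C_h (and in particular not on t or λ), such that ‖K_t‖² ≤ C_K² h^{-1} for every t ∈ [0,1]. -/
/-!
Testing the expansion of `f` against `h_v` gives `V(f, h_v) (1 + λ γ_v) = ⟪f, h_v⟫`, so Parseval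
reads `‖f‖² = ∑ ⟪f, h_v⟫² / (1 + λ γ_v)`. For `f = K_t` the coefficients `⟪K_t, h_v⟫ = h_v(t)`
are bounded by `C_h`, while `1 + λ γ_v ≥ 1 + (b (v + 1))^{2m}` with `b = (c₀ λ)^{1/(2m)}`.
By the integral test,
`∑ (1 + (b (v + 1))^{2m})⁻¹ ≤ ∫₀^∞ (1 + (b x)^{2m})⁻¹ dx = b⁻¹ ∫₀^∞ (1 + y^{2m})⁻¹ dy`,
and the last integral is finite because `2m > 1`.
-/

open scoped RealInnerProductSpace
open MeasureTheory

noncomputable section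

/-- The RKHS framework of the paper: a real Hilbert space `H` of functions on `[0,1]`
(with evaluation map `ev`), whose inner product is `⟪f, g⟫ = V f g + lam * J f g` for
symmetric positive-semidefinite bilinear forms `V` and `J`, together with a simultaneously
orthogonal system `hvec` with eigenvalues `γ`, uniformly bounded by `Ch`, in which every
element expands, a reproducing kernel `K`, and the operator `W = W_lam` determined by
`⟪W f, g⟫ = lam * J f g`. -/
structure RKHSContext (lam : ℝ) (H : Type*) [NormedAddCommGroup H] [InnerProductSpace ℝ H] where
  ev : H → ℝ → ℝ
  V : H →ₗ[ℝ] H →ₗ[ℝ] ℝ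
  J : H →ₗ[ℝ] H →ₗ[ℝ] ℝ
  V_symm : ∀ f g : H, V f g = V g f
  J_symm : ∀ f g : H, J f g = J g f
  V_nonneg : ∀ f : H, 0 ≤ V f f
  J_nonneg : ∀ f : H, 0 ≤ J f f
  inner_eq : ∀ f g : H, ⟪f, g⟫ = V f g + lam * J f g
  hvec : ℕ → H
  γ : ℕ → ℝ
  γ_pos : ∀ v, 0 < γ v
  Ch : ℝ
  hvec_bound : ∀ v : ℕ, ∀ t ∈ Set.Icc (0:ℝ) 1, |ev (hvec v) t| ≤ Ch
  V_orth : ∀ u v : ℕ, V (hvec u) (hvec v) = if u = v then 1 else 0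
  J_orth : ∀ u v : ℕ, J (hvec u) (hvec v) = if u = v then γ u else 0
  expansion : ∀ g : H, HasSum (fun v => V g (hvec v) • hvec v) g
  K : ℝ → H
  reproducing : ∀ t ∈ Set.Icc (0:ℝ) 1, ∀ f : H, ⟪K t, f⟫ = ev f t
  W : H →ₗ[ℝ] H
  W_spec : ∀ f g : H, ⟪W f, g⟫ = lam * J f g

open Set

namespace RKHSContext

variable {lam : ℝ} {H : Type*} [NormedAddCommGroup H] [InnerProductSpace ℝ H]
  (ctx : RKHSContext lam H)

theorem inner_hvec (u v : ℕ) :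
    ⟪ctx.hvec u, ctx.hvec v⟫ = if u = v then 1 + lam * ctx.γ u else 0 := by
  rw [ctx.inner_eq, ctx.V_orth, ctx.J_orth]
  split_ifs <;> simp

theorem hvec_ne_zero (v : ℕ) : ctx.hvec v ≠ 0 := fun h => by
  simpa [h] using ctx.V_orth v v

theorem one_add_mul_γ_pos (v : ℕ) : 0 < 1 + lam * ctx.γ v := by
  have h := ctx.inner_hvec v v
  rw [if_pos rfl, real_inner_self_eq_norm_sq] at h
  exact h ▸ pow_pos (norm_pos_iff.2 (ctx.hvec_ne_zero v)) 2

theorem V_hvec_mul_eq_inner (f : H) (v : ℕ) :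
    ctx.V f (ctx.hvec v) * (1 + lam * ctx.γ v) = ⟪f, ctx.hvec v⟫ := by
  have h := (ctx.expansion f).mapL (innerSL ℝ (ctx.hvec v))
  simp only [innerSL_apply_apply, real_inner_smul_right, ctx.inner_hvec] at h
  rw [real_inner_comm, h.unique (hasSum_single v fun u hu => by simp [Ne.symm hu])]
  simp

theorem hasSum_inner_hvec_sq_div (f : H) :
    HasSum (fun v => ⟪f, ctx.hvec v⟫ ^ 2 / (1 + lam * ctx.γ v)) (‖f‖ ^ 2) := by
  have h := (ctx.expansion f).mapL (innerSL ℝ f)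
  simp only [innerSL_apply_apply, real_inner_smul_right, real_inner_self_eq_norm_sq] at h
  have hcoef : ∀ v, ⟪f, ctx.hvec v⟫ ^ 2 / (1 + lam * ctx.γ v) =
      ctx.V f (ctx.hvec v) * ⟪f, ctx.hvec v⟫ := fun v => by
    rw [← ctx.V_hvec_mul_eq_inner f v]
    field_simp [(ctx.one_add_mul_γ_pos v).ne']
  simpa only [hcoef] using h

theorem norm_K_sq_le_mul_tsum {t : ℝ} (ht : t ∈ Icc 0 1)
    (hs : Summable fun v => (1 + lam * ctx.γ v)⁻¹) :
    ‖ctx.K t‖ ^ 2 ≤ ctx.Ch ^ 2 * ∑' v, (1 + lam * ctx.γ v)⁻¹ := by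
  have hK := ctx.hasSum_inner_hvec_sq_div (ctx.K t)
  rw [← hK.tsum_eq, ← tsum_mul_left]
  refine hK.summable.tsum_le_tsum (fun v => ?_) (hs.mul_left _)
  rw [ctx.reproducing t ht, div_eq_mul_inv]
  obtain ⟨hlow, hupp⟩ := abs_le.1 (ctx.hvec_bound v t ht)
  exact mul_le_mul_of_nonneg_right (sq_le_sq' hlow hupp)
    (inv_nonneg.2 (ctx.one_add_mul_γ_pos v).le)

end RKHSContext

theorem antitoneOn_inv_one_add_rpow {p : ℝ} (hp : 0 ≤ p) :
    AntitoneOn (fun y : ℝ => (1 + y ^ p)⁻¹) (Ici 0) := by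
  intro x (hx : 0 ≤ x) y _ hxy
  dsimp only
  gcongr

theorem integrableOn_inv_one_add_rpow {p : ℝ} (hp : 1 < p) :
    IntegrableOn (fun y : ℝ => (1 + y ^ p)⁻¹) (Ioi 0) := by
  have hcont : ContinuousOn (fun y : ℝ => (1 + y ^ p)⁻¹) (Ici 0) :=
    (continuous_const.add (Real.continuous_rpow_const (by linarith))).continuousOn.inv₀
      fun y (hy : 0 ≤ y) => (by positivity : (0 : ℝ) < 1 + y ^ p).ne'
  rw [← Ioc_union_Ioi_eq_Ioi zero_le_one]
  refine IntegrableOn.union ?_ ?_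
  · exact ((hcont.mono Icc_subset_Ici_self).integrableOn_Icc).mono_set Ioc_subset_Icc_self
  · refine (integrableOn_Ioi_rpow_of_lt (by linarith : -p < -1) one_pos).mono'
      ((hcont.mono (Ioi_subset_Ici zero_le_one)).aestronglyMeasurable measurableSet_Ioi) ?_
    filter_upwards [ae_restrict_mem measurableSet_Ioi] with y (hy : 1 < y)
    have hy0 : 0 < y := one_pos.trans hy
    rw [Real.norm_of_nonneg (by positivity), Real.rpow_neg hy0.le]
    gcongr
    linarith

theorem integral_inv_one_add_rpow_pos {p : ℝ} (hp : 1 < p) :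
    0 < ∫ y in Ioi (0 : ℝ), (1 + y ^ p)⁻¹ := by
  have hpos : ∀ y ∈ Ioi (0 : ℝ), 0 < (1 + y ^ p)⁻¹ := fun y (hy : 0 < y) => by positivity
  rw [setIntegral_pos_iff_support_of_nonneg_ae _ (integrableOn_inv_one_add_rpow hp)]
  · rw [inter_eq_right.2 fun y hy => Function.mem_support.2 (hpos y hy).ne', Real.volume_Ioi]
    exact ENNReal.zero_lt_top
  · filter_upwards [ae_restrict_mem measurableSet_Ioi] with y hy using (hpos y hy).le

theorem antitoneOn_inv_one_add_mul_rpow {p b : ℝ} (hp : 0 ≤ p) (hb : 0 ≤ b) :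
    AntitoneOn (fun x : ℝ => (1 + (b * x) ^ p)⁻¹) (Ici 0) :=
  fun x (hx : 0 ≤ x) y (hy : 0 ≤ y) hxy =>
    antitoneOn_inv_one_add_rpow hp (by positivity : 0 ≤ b * x) (by positivity : 0 ≤ b * y)
      (by gcongr)

theorem integrableOn_inv_one_add_mul_rpow {p b : ℝ} (hp : 1 < p) (hb : 0 < b) :
    IntegrableOn (fun x : ℝ => (1 + (b * x) ^ p)⁻¹) (Ioi 0) := by
  rw [integrableOn_Ioi_comp_mul_left_iff (fun y => (1 + y ^ p)⁻¹) 0 hb, mul_zero]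
  exact integrableOn_inv_one_add_rpow hp

theorem summable_inv_one_add_mul_rpow {p b : ℝ} (hp : 1 < p) (hb : 0 < b) :
    Summable fun n : ℕ => (1 + (b * (n + 1)) ^ p)⁻¹ := by
  have h := (antitoneOn_inv_one_add_mul_rpow (by linarith) hb.le).summable_of_integrableOn_Ioi_zero
    (integrableOn_inv_one_add_mul_rpow hp hb) fun x (hx : 0 < x) => by positivity
  exact_mod_cast (summable_nat_add_iff 1).2 h

theorem tsum_inv_one_add_mul_rpow_le {p b : ℝ} (hp : 1 < p) (hb : 0 < b) :
    ∑' n : ℕ, (1 + (b * (n + 1)) ^ p)⁻¹ ≤ b⁻¹ * ∫ y in Ioi (0 : ℝ), (1 + y ^ p)⁻¹ := by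
  have h := (antitoneOn_inv_one_add_mul_rpow (by linarith) hb.le).tsum_add_one_le_integral
    (integrableOn_inv_one_add_mul_rpow hp hb) fun x (hx : 0 < x) => by positivity
  rw [integral_comp_mul_left_Ioi (fun y => (1 + y ^ p)⁻¹) 0 hb, mul_zero, smul_eq_mul] at h
  exact_mod_cast h

/-- There exists a constant `C_K > 0`, depending only on `m`, `c₀` and
`C_h` (in particular not on `t` or `λ`), such that `‖K_t‖² ≤ C_K² h⁻¹` for every
`t ∈ [0,1]`, where `h = λ^{1/(2m)}` and `γ_v ≥ c₀ v^{2m}`. -/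
theorem norm_kernel_sq_le (m c₀ Ch : ℝ) (hm : 1/2 < m) (hc₀ : 0 < c₀) :
    ∃ CK : ℝ, 0 < CK ∧
      ∀ (lam : ℝ), 0 < lam →
        ∀ (H : Type) [NormedAddCommGroup H] [InnerProductSpace ℝ H]
          (ctx : RKHSContext lam H),
          ctx.Ch = Ch →
          (∀ v : ℕ, c₀ * ((v : ℝ) + 1) ^ (2 * m) ≤ ctx.γ v) →
          ∀ t ∈ Set.Icc (0:ℝ) 1, ‖ctx.K t‖^2 ≤ CK^2 * (lam ^ (1/(2*m)))⁻¹ := by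
  have hp : 1 < 2 * m := by linarith
  set I := ∫ y in Ioi (0 : ℝ), (1 + y ^ (2 * m))⁻¹
  have hI : 0 < I := integral_inv_one_add_rpow_pos hp
  refine ⟨√((Ch ^ 2 + 1) * (c₀ ^ (1 / (2 * m)))⁻¹ * I), by positivity, ?_⟩
  rintro lam hlam H _ _ ctx rfl hγ t ht
  set b := (c₀ * lam) ^ (1 / (2 * m)) with hb_def
  have hb : 0 < b := by positivity
  have hdom : ∀ v : ℕ, (1 + lam * ctx.γ v)⁻¹ ≤ (1 + (b * (v + 1)) ^ (2 * m))⁻¹ := fun v => by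
    have hbv : (b * (v + 1)) ^ (2 * m) = lam * (c₀ * ((v : ℝ) + 1) ^ (2 * m)) := by
      rw [Real.mul_rpow hb.le (by positivity), ← Real.rpow_mul (by positivity),
        one_div_mul_cancel (by positivity), Real.rpow_one]
      ring
    rw [hbv]
    gcongr
    exact hγ v
  have hnonneg : ∀ v, 0 ≤ (1 + lam * ctx.γ v)⁻¹ := fun v =>
    (inv_pos.2 (ctx.one_add_mul_γ_pos v)).le
  have hs := summable_inv_one_add_mul_rpow hp hb
  have hsγ := hs.of_nonneg_of_le hnonneg hdom
  have hsum : ∑' v, (1 + lam * ctx.γ v)⁻¹ ≤ b⁻¹ * I :=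
    (hsγ.tsum_le_tsum hdom hs).trans (tsum_inv_one_add_mul_rpow_le hp hb)
  calc ‖ctx.K t‖ ^ 2 ≤ ctx.Ch ^ 2 * ∑' v, (1 + lam * ctx.γ v)⁻¹ :=
        ctx.norm_K_sq_le_mul_tsum ht hsγ
    _ ≤ (ctx.Ch ^ 2 + 1) * (b⁻¹ * I) :=
      mul_le_mul (by linarith) hsum (tsum_nonneg hnonneg) (by positivity)
    _ = _ := by
      rw [Real.sq_sqrt (by positivity), hb_def, Real.mul_rpow hc₀.le hlam.le, mul_inv]
      ring

end
end
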